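/- Let n ≥ 1 be an integer, let t ∈ ℝ, h > 0, and let a, b ≥ 0 satisfy b < 1 and a + b < 1. Set C := max{1, Γ(1 − b), Γ(1 − a − b)}. Then, writing s₀ := t, one has ∑_{i=1}^n ∫_{{t < s₁ < ⋯ < s_n < t + h}} (s_i − s_{i−1})^{−a} ∏_{j=1}^n (s_j − s_{j−1})^{−b} ds ≤ n · Cⁿ · h^{n − nb − a} / Γ(n − nb − a + 1). -/

import Mathlib

/-!
The sum is bounded term by term through Dirichlet's integral
`∫_{t < s₁ < ⋯ < sₙ < x} ∏ⱼ (sⱼ - sⱼ₋₁)^(eⱼ - 1) ds = ∏ⱼ Γ(eⱼ) / Γ(∑ⱼ eⱼ + 1) · (x - t)^(∑ⱼ eⱼ)`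
for `eⱼ > 0`, proved by induction on `n`: integrating out `s₂, …, sₙ` first leaves a Beta integral
in `s₁`. The `i`-th term is the case `eᵢ = 1 - a - b` and `eⱼ = 1 - b` for `j ≠ i`, so that
`∑ⱼ eⱼ = n - nb - a` and `∏ⱼ Γ(eⱼ) ≤ Cⁿ`.
-/

open MeasureTheory Set Real ProbabilityTheory

theorem lintegral_Ioo_rpow_mul_one_sub_rpow {p q : ℝ} (hp : 0 < p) (hq : 0 < q) :
    ∫⁻ v in Ioo 0 1, ENNReal.ofReal (v ^ (p - 1) * (1 - v) ^ (q - 1)) =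
      ENNReal.ofReal (beta p q) := by
  have hβ := beta_pos hp hq
  have h := lintegral_betaPDF_eq_one hp hq
  simp_rw [lintegral_betaPDF, mul_assoc, ENNReal.ofReal_mul (one_div_pos.2 hβ).le] at h
  rw [lintegral_const_mul _ (by fun_prop), mul_comm] at h
  rw [ENNReal.eq_inv_of_mul_eq_one_left h, one_div, ENNReal.ofReal_inv_of_pos hβ, inv_inv]

theorem lintegral_Ioo_sub_rpow_mul_sub_rpow {p q t x : ℝ} (hp : 0 < p) (hq : 0 < q)
    (htx : t < x) :
    ∫⁻ y in Ioo t x, ENNReal.ofReal ((y - t) ^ (p - 1) * (x - y) ^ (q - 1)) =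
      ENNReal.ofReal (beta p q * (x - t) ^ (p + q - 1)) := by
  have hL : 0 < x - t := sub_pos.2 htx
  have himage : (fun v => (x - t) * v + t) '' Ioo 0 1 = Ioo t x := by
    rw [image_affine_Ioo hL]; simp
  have hderiv : ∀ v ∈ Ioo (0 : ℝ) 1,
      HasDerivWithinAt (fun v => (x - t) * v + t) (x - t) (Ioo 0 1) v := fun v _ =>
    (((hasDerivAt_id v).const_mul (x - t)).add_const t).hasDerivWithinAt.congr_deriv (mul_one _)
  have hinj : InjOn (fun v => (x - t) * v + t) (Ioo 0 1) := fun v _ w _ hvw => by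
    simpa [hL.ne'] using hvw
  rw [← himage, lintegral_image_eq_lintegral_abs_deriv_mul measurableSet_Ioo hderiv hinj]
  have hscale : ∀ v ∈ Ioo (0 : ℝ) 1,
      ENNReal.ofReal |x - t| * ENNReal.ofReal
          (((x - t) * v + t - t) ^ (p - 1) * (x - ((x - t) * v + t)) ^ (q - 1)) =
        ENNReal.ofReal ((x - t) ^ (p + q - 1)) *
          ENNReal.ofReal (v ^ (p - 1) * (1 - v) ^ (q - 1)) := by
    rintro v ⟨hv0, hv1⟩
    rw [← ENNReal.ofReal_mul (abs_nonneg _), ← ENNReal.ofReal_mul (by positivity)]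
    congr 1
    rw [show (x - t) * v + t - t = (x - t) * v by ring,
      show x - ((x - t) * v + t) = (x - t) * (1 - v) by ring,
      mul_rpow hL.le hv0.le, mul_rpow hL.le (by linarith), abs_of_pos hL,
      show p + q - 1 = 1 + (p - 1) + (q - 1) by ring, rpow_add hL, rpow_add hL, rpow_one]
    ring
  rw [setLIntegral_congr_fun measurableSet_Ioo hscale, lintegral_const_mul _ (by fun_prop),
    lintegral_Ioo_rpow_mul_one_sub_rpow hp hq, ← ENNReal.ofReal_mul (by positivity), mul_comm]

theorem lintegral_fin_succ_cons {α : Type*} [MeasureSpace α] [SigmaFinite (volume : Measure α)]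
    {n : ℕ} {f : (Fin (n + 1) → α) → ENNReal} (hf : Measurable f) :
    ∫⁻ s, f s = ∫⁻ y, ∫⁻ s', f (Fin.cons y s') := by
  have he := (volume_preserving_piFinSuccAbove (fun _ : Fin (n + 1) => α) 0).symm
  rw [← he.lintegral_comp hf, Measure.volume_eq_prod,
    lintegral_prod (fun p => f (MeasurableEquiv.piFinSuccAbove _ 0 |>.symm p))
      (hf.comp he.measurable).aemeasurable]
  simp [MeasurableEquiv.piFinSuccAbove_symm_apply, Fin.consEquiv]

theorem rpow_neg_mul_prod_rpow_neg {ι : Type*} [Fintype ι] [DecidableEq ι] {y : ι → ℝ}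
    (hy : ∀ j, 0 < y j) (i : ι) (a b : ℝ) :
    y i ^ (-a) * ∏ j, y j ^ (-b) = ∏ j, y j ^ (-b - if j = i then a else 0) := by
  have hsplit : ∀ j, y j ^ (-b - if j = i then a else 0) =
      y j ^ (-b) * if j = i then y j ^ (-a) else 1 := by
    intro j
    split_ifs <;> simp [sub_eq_add_neg, rpow_add (hy j), mul_comm]
  simp_rw [hsplit, Finset.prod_mul_distrib, Finset.prod_ite_eq', Finset.mem_univ, if_true]
  ring

def orderedSimplex (n : ℕ) (t x : ℝ) : Set (Fin n → ℝ) :=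
  {s | StrictMono s ∧ ∀ j, s j ∈ Ioo t x}

/-- `increment t s j = s j - s (j - 1)`, with `t` in place of `s (-1)`. -/
def increment {n : ℕ} (t : ℝ) (s : Fin n → ℝ) (j : Fin n) : ℝ :=
  s j - (Fin.cons t s : Fin (n + 1) → ℝ) j.castSucc

section OrderedSimplex

variable {n : ℕ} {t x : ℝ}

theorem measurableSet_orderedSimplex : MeasurableSet (orderedSimplex n t x) := by
  have hmono : MeasurableSet {s : Fin n → ℝ | StrictMono s} := by
    simp only [StrictMono, ofPred_forall]
    exact .iInter fun i => .iInter fun j => .iInter fun _ =>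
      measurableSet_lt (measurable_pi_apply i) (measurable_pi_apply j)
  have hbox : MeasurableSet {s : Fin n → ℝ | ∀ j, s j ∈ Ioo t x} := by
    simp only [ofPred_forall]
    exact .iInter fun j => measurableSet_Ioo.preimage (measurable_pi_apply j)
  exact hmono.inter hbox

theorem orderedSimplex_zero : orderedSimplex 0 t x = univ :=
  eq_univ_of_forall fun _ => ⟨fun i => i.elim0, fun j => j.elim0⟩

theorem cons_mem_orderedSimplex_iff {y : ℝ} {s : Fin n → ℝ} :
    (Fin.cons y s : Fin (n + 1) → ℝ) ∈ orderedSimplex (n + 1) t x ↔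
      y ∈ Ioo t x ∧ s ∈ orderedSimplex n y x := by
  simp only [orderedSimplex, mem_ofPred_eq, Fin.strictMono_cons, Fin.forall_fin_succ,
    Fin.cons_zero, Fin.cons_succ, mem_Ioo]
  constructor
  · rintro ⟨⟨hy, hs⟩, ⟨hty, hyx⟩, hbox⟩
    exact ⟨⟨hty, hyx⟩, hs, fun j => ⟨hy j, (hbox j).2⟩⟩
  · rintro ⟨⟨hty, hyx⟩, hs, hbox⟩
    exact ⟨⟨fun j => (hbox j).1, hs⟩, ⟨hty, hyx⟩, fun j => ⟨hty.trans (hbox j).1, (hbox j).2⟩⟩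

theorem increment_cons_zero (y : ℝ) (s : Fin n → ℝ) :
    increment t (Fin.cons y s : Fin (n + 1) → ℝ) 0 = y - t := by
  simp [increment]

theorem increment_cons_succ (y : ℝ) (s : Fin n → ℝ) (k : Fin n) :
    increment t (Fin.cons y s : Fin (n + 1) → ℝ) k.succ = increment y s k := by
  simp [increment]

theorem increment_pos {s : Fin n → ℝ} (hs : s ∈ orderedSimplex n t x) (j : Fin n) :
    0 < increment t s j := by
  have hmono : StrictMono (Fin.cons t s : Fin (n + 1) → ℝ) :=
    Fin.strictMono_cons.2 ⟨fun j => (hs.2 j).1, hs.1⟩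
  simpa [increment] using hmono (Fin.castSucc_lt_succ (i := j))

theorem measurable_increment (t : ℝ) (j : Fin n) :
    Measurable fun s : Fin n → ℝ => increment t s j := by
  unfold increment
  refine (measurable_pi_apply j).sub ?_
  refine Fin.cases ?_ (fun k => ?_) j.castSucc
  · simp only [Fin.cons_zero]; exact measurable_const
  · simp only [Fin.cons_succ]; exact measurable_pi_apply k

theorem sub_dite_eq_increment (s : Fin n → ℝ) (j : Fin n) :
    s j - (if _hj : (j : ℕ) = 0 then t else s ⟨(j : ℕ) - 1, (Nat.sub_le _ _).trans_lt j.isLt⟩) =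
      increment t s j := by
  unfold increment
  split_ifs with hj
  · rw [show j.castSucc = 0 from Fin.ext hj, Fin.cons_zero]
  · rw [show j.castSucc = Fin.succ ⟨(j : ℕ) - 1, by omega⟩ from Fin.ext (by simp; omega),
      Fin.cons_succ]

theorem setLIntegral_orderedSimplex_succ {f : (Fin (n + 1) → ℝ) → ENNReal} (hf : Measurable f) :
    ∫⁻ s in orderedSimplex (n + 1) t x, f s =
      ∫⁻ y in Ioo t x, ∫⁻ s in orderedSimplex n y x, f (Fin.cons y s) := by
  rw [← lintegral_indicator measurableSet_orderedSimplex,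
    lintegral_fin_succ_cons (hf.indicator measurableSet_orderedSimplex),
    ← lintegral_indicator measurableSet_Ioo]
  refine lintegral_congr fun y => ?_
  by_cases hy : y ∈ Ioo t x
  · have hpre : Fin.cons y ⁻¹' orderedSimplex (n + 1) t x = orderedSimplex n y x :=
      ext fun s => cons_mem_orderedSimplex_iff.trans (and_iff_right hy)
    rw [indicator_of_mem hy, ← lintegral_indicator measurableSet_orderedSimplex, ← hpre]
    exact lintegral_congr fun s => (indicator_comp_right _).symm
  · simp [cons_mem_orderedSimplex_iff, hy]

theorem measurable_prod_increment_rpow (t : ℝ) (e : Fin n → ℝ) :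
    Measurable fun s => ∏ j, increment t s j ^ (e j - 1) :=
  Finset.measurable_prod _ fun j _ => (measurable_increment t j).pow_const _

theorem lintegral_orderedSimplex_prod_increment_rpow (htx : t < x) {e : Fin n → ℝ}
    (he : ∀ j, 0 < e j) :
    ∫⁻ s in orderedSimplex n t x, ENNReal.ofReal (∏ j, increment t s j ^ (e j - 1)) =
      ENNReal.ofReal ((∏ j, Gamma (e j)) / Gamma (∑ j, e j + 1) * (x - t) ^ ∑ j, e j) := by
  induction n generalizing t with
  | zero => simp [orderedSimplex_zero, volume_pi]
  | succ n ih =>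
    obtain ⟨e₀, e, rfl⟩ : ∃ e₀ e', e = Fin.cons e₀ e' :=
      ⟨e 0, Fin.tail e, (Fin.cons_self_tail e).symm⟩
    simp only [Fin.forall_fin_succ, Fin.cons_zero, Fin.cons_succ] at he
    have hE : 0 < ∑ j, e j + 1 :=
      add_pos_of_nonneg_of_pos (Finset.sum_nonneg fun j _ => (he.2 j).le) one_pos
    have hK : 0 ≤ (∏ j, Gamma (e j)) / Gamma (∑ j, e j + 1) :=
      div_nonneg (Finset.prod_nonneg fun j _ => (Gamma_pos_of_pos (he.2 j)).le)
        (Gamma_pos_of_pos hE).le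
    have hinner : ∀ y ∈ Ioo t x, ∫⁻ s in orderedSimplex n y x,
          ENNReal.ofReal
            (∏ j, increment t (Fin.cons y s) j ^ ((Fin.cons e₀ e : Fin (n + 1) → ℝ) j - 1)) =
        ENNReal.ofReal ((∏ j, Gamma (e j)) / Gamma (∑ j, e j + 1) *
          ((y - t) ^ (e₀ - 1) * (x - y) ^ ((∑ j, e j + 1) - 1))) := by
      intro y hy
      have hy₀ : 0 ≤ (y - t) ^ (e₀ - 1) := rpow_nonneg (sub_pos.2 hy.1).le _
      simp_rw [Fin.prod_univ_succ, increment_cons_zero, increment_cons_succ, Fin.cons_zero,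
        Fin.cons_succ, ENNReal.ofReal_mul hy₀]
      rw [lintegral_const_mul _ (measurable_prod_increment_rpow y _).ennreal_ofReal,
        ih hy.2 he.2, ← ENNReal.ofReal_mul hy₀, add_sub_cancel_right, mul_left_comm]
    rw [setLIntegral_orderedSimplex_succ (measurable_prod_increment_rpow t _).ennreal_ofReal,
      setLIntegral_congr_fun measurableSet_Ioo hinner]
    simp_rw [ENNReal.ofReal_mul hK]
    rw [lintegral_const_mul _ (by fun_prop), lintegral_Ioo_sub_rpow_mul_sub_rpow he.1 hE htx,
      ← ENNReal.ofReal_mul hK]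
    congr 1
    rw [Fin.prod_univ_succ, Fin.sum_univ_succ, beta]
    simp only [Fin.cons_zero, Fin.cons_succ]
    rw [show e₀ + (∑ j, e j + 1) - 1 = e₀ + ∑ j, e j by ring,
      show e₀ + (∑ j, e j + 1) = e₀ + ∑ j, e j + 1 by ring]
    field_simp

theorem integral_orderedSimplex_prod_increment_rpow (htx : t < x) {e : Fin n → ℝ}
    (he : ∀ j, 0 < e j) :
    ∫ s in orderedSimplex n t x, ∏ j, increment t s j ^ (e j - 1) =
      (∏ j, Gamma (e j)) / Gamma (∑ j, e j + 1) * (x - t) ^ ∑ j, e j := by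
  have hnonneg : 0 ≤ᵐ[volume.restrict (orderedSimplex n t x)]
      fun s => ∏ j, increment t s j ^ (e j - 1) :=
    ae_restrict_of_forall_mem measurableSet_orderedSimplex fun s hs =>
      Finset.prod_nonneg fun j _ => rpow_nonneg (increment_pos hs j).le _
  have hE : 0 < ∑ j, e j + 1 :=
    add_pos_of_nonneg_of_pos (Finset.sum_nonneg fun j _ => (he j).le) one_pos
  rw [integral_eq_lintegral_of_nonneg_ae hnonneg
      (measurable_prod_increment_rpow t e).aestronglyMeasurable,
    lintegral_orderedSimplex_prod_increment_rpow htx he, ENNReal.toReal_ofReal]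
  exact mul_nonneg (div_nonneg (Finset.prod_nonneg fun j _ => (Gamma_pos_of_pos (he j)).le)
    (Gamma_pos_of_pos hE).le) (rpow_nonneg (sub_pos.2 htx).le _)

theorem integral_orderedSimplex_rpow_mul_prod_rpow_le {h a b C : ℝ} (hh : 0 < h) (hb : b < 1)
    (hab : a + b < 1) (hCb : Gamma (1 - b) ≤ C) (hCab : Gamma (1 - a - b) ≤ C) (i : Fin n) :
    ∫ s in orderedSimplex n t (t + h), increment t s i ^ (-a) * ∏ j, increment t s j ^ (-b) ≤
      C ^ n * h ^ ((n : ℝ) - n * b - a) / Gamma ((n : ℝ) - n * b - a + 1) := by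
  set e : Fin n → ℝ := fun j => 1 - b - if j = i then a else 0
  have he : ∀ j, 0 < e j := fun j => by
    simp only [e]; split_ifs <;> linarith
  have hsum : ∑ j, e j = n - n * b - a := by
    simp [e, Finset.sum_sub_distrib, Finset.sum_ite_eq']
  have hΓ : ∏ j, Gamma (e j) ≤ C ^ n := by
    refine (Finset.prod_le_prod (fun j _ => (Gamma_pos_of_pos (he j)).le) fun j _ => ?_).trans_eq
      (by simp : ∏ _j : Fin n, C = C ^ n)
    simp only [e]
    split_ifs
    · rwa [sub_right_comm]
    · rwa [sub_zero]
  have hintegrand : ∀ s ∈ orderedSimplex n t (t + h),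
      increment t s i ^ (-a) * ∏ j, increment t s j ^ (-b) = ∏ j, increment t s j ^ (e j - 1) :=
    fun s hs => by
      rw [rpow_neg_mul_prod_rpow_neg (increment_pos hs) i a b]
      simp only [e]
      congr! 2
      ring
  have hpos : 0 < Gamma ((n : ℝ) - n * b - a + 1) :=
    hsum ▸ Gamma_pos_of_pos
      (add_pos_of_nonneg_of_pos (Finset.sum_nonneg fun j _ => (he j).le) one_pos)
  rw [setIntegral_congr_fun measurableSet_orderedSimplex hintegrand,
    integral_orderedSimplex_prod_increment_rpow (by linarith) he, hsum, add_sub_cancel_left,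
    div_mul_eq_mul_div]
  gcongr

end OrderedSimplex

/-- With `s₀ := t`, for `a, b ≥ 0`, `b < 1`, `a + b < 1` and
`C := max {1, Γ(1-b), Γ(1-a-b)}`, one has
`∑ᵢ ∫_{t<s₁<⋯<sₙ<t+h} (sᵢ-sᵢ₋₁)^(-a) ∏ⱼ (sⱼ-sⱼ₋₁)^(-b) ds
  ≤ n · Cⁿ · h^(n-nb-a) / Γ(n-nb-a+1)`. -/
theorem simplex_integral_sum_bound (n : ℕ) (t h : ℝ) (hh : 0 < h)
    (a b : ℝ) (hb1 : b < 1) (hab : a + b < 1) :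
    ∑ i : Fin n,
        (∫ s in {s : Fin n → ℝ | StrictMono s ∧ ∀ j, s j ∈ Set.Ioo t (t + h)},
          (s i - (if hi : (i : ℕ) = 0 then t else s ⟨(i : ℕ) - 1, by omega⟩)) ^ (-a) *
            ∏ j : Fin n,
              (s j - (if hj : (j : ℕ) = 0 then t else s ⟨(j : ℕ) - 1, by omega⟩)) ^ (-b))
      ≤ (n : ℝ) * (max (max 1 (Real.Gamma (1 - b))) (Real.Gamma (1 - a - b))) ^ n *
          h ^ ((n : ℝ) - n * b - a) / Real.Gamma ((n : ℝ) - n * b - a + 1) := by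
  simp_rw [sub_dite_eq_increment]
  set C := max (max 1 (Gamma (1 - b))) (Gamma (1 - a - b))
  calc _ ≤ ∑ _i : Fin n, C ^ n * h ^ ((n : ℝ) - n * b - a) / Gamma ((n : ℝ) - n * b - a + 1) :=
        Finset.sum_le_sum fun i _ => integral_orderedSimplex_rpow_mul_prod_rpow_le hh hb1 hab
          (le_max_of_le_left (le_max_right _ _)) (le_max_right _ _) i
    _ = _ := by simp [mul_div_assoc, mul_assoc]
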